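/- arXiv:2310.05921 — 6 statements merged into one kernel-verified Lean document; each statement's English description precedes it below -/
import Mathlib

section
/- Suppose λ_{t+1} = λ_t + η(ε − ℓ_t) with η > 0, ε, ℓ_t ∈ [0,1], λ_1 ≥ λ^safe − η, and the eventual-safety property holds with horizon K ≥ 1 and safe level ε^safe ≤ ε: whenever λ_{t−K+1}, …, λ_t are all ≤ λ^safe, the average (1/K) Σ_{k=1}^{K} ℓ_{t−k+1} ≤ ε^safe. Then λ_t ≥ λ^safe − Kη for all t in 1,…,T+1. -/
/-!
Each step can lower `λ` by at most `η`, so the bound holds for the first `K` steps. Afterwards,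
if `λ_{t+1}` fell below `λ^safe − Kη`, the `K` parameters preceding it would all lie below
`λ^safe`; eventual safety then makes the average loss over that window at most `ε`, so over the
window `λ` did not decrease, and `λ_{t+1}` is at least the earlier value `λ_{t+1−K}`, which
satisfies the bound by induction.
-/

open Finset

section

variable {f : ℕ → ℝ}

theorem sub_mul_le_of_sub_le_succ {c : ℝ} (hstep : ∀ t ≥ 1, f t - c ≤ f (t + 1))
    {m : ℕ} (hm : 1 ≤ m) (k : ℕ) : f m - k * c ≤ f (m + k) := by
  induction k with
  | zero => simp
  | succ k ih =>
    have := hstep (m + k) (by omega)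
    rw [Nat.cast_succ, ← add_assoc]
    linarith

theorem eq_add_sum_Ico_of_succ_eq {d : ℕ → ℝ} {m : ℕ} (hd : ∀ t ≥ m, f (t + 1) = f t + d t)
    (k : ℕ) : f (m + k) = f m + ∑ s ∈ Ico m (m + k), d s := by
  induction k with
  | zero => simp
  | succ k ih =>
    rw [← add_assoc, sum_Ico_succ_top (by omega), hd (m + k) (by omega), ih]
    ring

theorem sub_mul_le_of_window_le {c L : ℝ} {K : ℕ} (hc : 0 ≤ c) (hK : 1 ≤ K)
    (hstep : ∀ t ≥ 1, f t - c ≤ f (t + 1)) (hinit : L - c ≤ f 1)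
    (hwindow : ∀ a ≥ 1, (∀ s ∈ Ico a (a + K), f s ≤ L) → f a ≤ f (a + K)) :
    ∀ t ≥ 1, L - K * c ≤ f t := by
  intro t ht
  induction t using Nat.strong_induction_on with
  | _ t ih =>
  by_cases htK : t ≤ K
  · have hdrop := sub_mul_le_of_sub_le_succ hstep le_rfl (t - 1)
    rw [show 1 + (t - 1) = t by omega, Nat.cast_sub ht, Nat.cast_one] at hdrop
    have : (t : ℝ) ≤ K := by exact_mod_cast htK
    linarith [mul_le_mul_of_nonneg_right this hc]
  · obtain ⟨a, rfl⟩ : ∃ a, t = a + K := ⟨t - K, by omega⟩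
    have ha : 1 ≤ a := by omega
    by_contra! hlow
    have hbelow : ∀ s ∈ Ico a (a + K), f s ≤ L := by
      intro s hs
      obtain ⟨hs₁, hs₂⟩ := mem_Ico.mp hs
      have hdrop := sub_mul_le_of_sub_le_succ hstep (by omega : 1 ≤ s) (a + K - s)
      rw [show s + (a + K - s) = a + K by omega] at hdrop
      have : ((a + K - s : ℕ) : ℝ) ≤ K := by exact_mod_cast (by omega : a + K - s ≤ K)
      linarith [mul_le_mul_of_nonneg_right this hc]
    linarith [hwindow a ha hbelow, ih a (by omega) ha]

end

theorem controller_le_of_sum_loss_le {η ε : ℝ} {ℓ lam : ℕ → ℝ} (hη : 0 ≤ η)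
    (hupd : ∀ t ≥ 1, lam (t + 1) = lam t + η * (ε - ℓ t)) {a K : ℕ} (ha : 1 ≤ a)
    (hloss : ∑ s ∈ Ico a (a + K), ℓ s ≤ K * ε) : lam a ≤ lam (a + K) := by
  have hsum := eq_add_sum_Ico_of_succ_eq (fun t ht => hupd t (le_trans ha ht)) K
  rw [← mul_sum, sum_sub_distrib, sum_const, Nat.card_Ico, Nat.add_sub_cancel_left,
    nsmul_eq_mul] at hsum
  nlinarith [mul_nonneg hη (sub_nonneg.mpr hloss)]

theorem Icc_window_eq_Ico {a K : ℕ} (ha : 1 ≤ a) (hK : 1 ≤ K) :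
    Icc (a + K - 1 - K + 1) (a + K - 1) = Ico a (a + K) := by
  ext s
  simp only [mem_Icc, mem_Ico]
  omega

theorem conformal_lambda_lower_bound_general
    (η ε εsafe lsafe : ℝ) (K T : ℕ) (ℓ lam : ℕ → ℝ)
    (hη : 0 < η) (hε : ε ∈ Set.Icc (0:ℝ) 1)
    (hsafe_le : εsafe ≤ ε)
    (hK : 1 ≤ K)
    (hℓ : ∀ t ≥ 1, ℓ t ∈ Set.Icc (0:ℝ) 1)
    (hupd : ∀ t ≥ 1, lam (t + 1) = lam t + η * (ε - ℓ t))
    (hinit : lam 1 ≥ lsafe - η)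
    (hevsafe : ∀ t ≥ K, (∀ s ∈ Finset.Icc (t - K + 1) t, lam s ≤ lsafe) →
      (1 / (K : ℝ)) * ∑ s ∈ Finset.Icc (t - K + 1) t, ℓ s ≤ εsafe) :
    ∀ t ∈ Finset.Icc 1 (T + 1), lam t ≥ lsafe - (K : ℝ) * η := by
  have hstep : ∀ t ≥ 1, lam t - η ≤ lam (t + 1) := by
    intro t ht
    rw [hupd t ht]
    nlinarith [hε.1, (hℓ t ht).2]
  have hwindow : ∀ a ≥ 1, (∀ s ∈ Ico a (a + K), lam s ≤ lsafe) → lam a ≤ lam (a + K) := by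
    intro a ha hbelow
    have hK₀ : (0 : ℝ) < K := by exact_mod_cast hK
    have hloss := hevsafe (a + K - 1) (by omega)
    rw [Icc_window_eq_Ico ha hK, one_div, inv_mul_le_iff₀ hK₀] at hloss
    exact controller_le_of_sum_loss_le hη.le hupd ha
      ((hloss hbelow).trans (mul_le_mul_of_nonneg_left hsafe_le hK₀.le))
  intro t ht
  exact sub_mul_le_of_window_le hη.le hK hstep hinit hwindow t (mem_Icc.mp ht).1

theorem conformal_lambda_lower_bound
    (η ε εsafe lsafe : ℝ) (K T : ℕ) (ℓ lam : ℕ → ℝ)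
    (hη : 0 < η) (hε : ε ∈ Set.Icc (0:ℝ) 1)
    (hεsafe : εsafe ∈ Set.Icc (0:ℝ) 1) (hsafe_le : εsafe ≤ ε)
    (hK : 1 ≤ K)
    (hℓ : ∀ t ≥ 1, ℓ t ∈ Set.Icc (0:ℝ) 1)
    (hupd : ∀ t ≥ 1, lam (t + 1) = lam t + η * (ε - ℓ t))
    (hinit : lam 1 ≥ lsafe - η)
    (hevsafe : ∀ t ≥ K, (∀ s ∈ Finset.Icc (t - K + 1) t, lam s ≤ lsafe) →
      (1 / (K : ℝ)) * ∑ s ∈ Finset.Icc (t - K + 1) t, ℓ s ≤ εsafe) :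
    ∀ t ∈ Finset.Icc 1 (T + 1), lam t ≥ lsafe - (K : ℝ) * η :=
  conformal_lambda_lower_bound_general η ε εsafe lsafe K T ℓ lam hη hε hsafe_le hK hℓ hupd hinit
    hevsafe
end

section
/- Under the conformal controller update λ_{t+1} = λ_t + η(ε − ℓ_t) with λ_1 ≥ λ^safe − η and the eventual-safety property (horizon K, safe level ε^safe ≤ ε), the empirical risk satisfies (1/t) Σ_{s=1}^{t} ℓ_s ≤ ε + ((λ_1 − λ^safe)/η + K)/t for every t ≥ K. -/
/-! Each step lowers `lam` by at most `η`, so once `lam n < lsafe - η (K - 1)` the `K` parameters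
up to time `n` (those that exist) all lie below `lsafe`. If that window reaches back past time `1`
this contradicts `lam 1 ≥ lsafe - η`; otherwise eventual safety makes the window's average loss at
most `εsafe ≤ ε`, so `lam` did not decrease across it. By strong induction `lam` never falls below
`lsafe - η K`, and telescoping the update, `η (t ε - ∑_{s ≤ t} ℓ s) = lam (t + 1) - lam 1`, turns
this into the risk bound. -/

open Finset

namespace ConformalController

variable {η ε : ℝ} {ℓ lam : ℕ → ℝ}

theorem sub_eq_mul_sub_sum_Ico (hupd : ∀ t ≥ 1, lam (t + 1) = lam t + η * (ε - ℓ t))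
    {a b : ℕ} (ha : 1 ≤ a) (hab : a ≤ b) :
    lam b - lam a = η * ((b - a : ℕ) * ε - ∑ s ∈ Ico a b, ℓ s) := by
  have hcard : ((b - a : ℕ) : ℝ) * ε = ∑ _s ∈ Ico a b, ε := by
    rw [sum_const, Nat.card_Ico, nsmul_eq_mul]
  rw [hcard, ← sum_sub_distrib, mul_sum, ← sum_Ico_sub lam hab]
  refine sum_congr rfl fun s hs => ?_
  rw [hupd s (ha.trans (mem_Ico.1 hs).1)]
  ring

theorem le_of_sum_Ico_le (hη : 0 ≤ η) (hupd : ∀ t ≥ 1, lam (t + 1) = lam t + η * (ε - ℓ t))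
    {a b : ℕ} (ha : 1 ≤ a) (hab : a ≤ b) (hsum : ∑ s ∈ Ico a b, ℓ s ≤ (b - a : ℕ) * ε) :
    lam a ≤ lam b := by
  have := sub_eq_mul_sub_sum_Ico hupd ha hab
  nlinarith

theorem monotoneOn_add_mul (hη : 0 ≤ η) (hε : 0 ≤ ε) (hℓ : ∀ t ≥ 1, ℓ t ≤ 1)
    (hupd : ∀ t ≥ 1, lam (t + 1) = lam t + η * (ε - ℓ t)) :
    MonotoneOn (fun t : ℕ => lam t + η * t) {t | 1 ≤ t} := by
  refine monotoneOn_nat_Ici_of_le_succ fun t ht => ?_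
  have := mul_le_mul_of_nonneg_left (show -1 ≤ ε - ℓ t by linarith [hℓ t ht]) hη
  simp only [hupd t ht, Nat.cast_add, Nat.cast_one]
  linarith

theorem sub_mul_le_lam {lsafe : ℝ} {K : ℕ} (hη : 0 ≤ η) (hK : 1 ≤ K)
    (hupd : ∀ t ≥ 1, lam (t + 1) = lam t + η * (ε - ℓ t))
    (hdrift : MonotoneOn (fun t : ℕ => lam t + η * t) {t | 1 ≤ t})
    (hinit : lsafe - η ≤ lam 1)
    (hwindow : ∀ t ≥ K, (∀ s ∈ Icc (t - K + 1) t, lam s ≤ lsafe) →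
      ∑ s ∈ Icc (t - K + 1) t, ℓ s ≤ K * ε) :
    ∀ t ≥ 1, lsafe - η * K ≤ lam t := by
  have hK' : (1 : ℝ) ≤ K := by exact_mod_cast hK
  intro t ht
  induction t using Nat.strong_induction_on with
  | _ t ih =>
  obtain _ | _ | n := t
  · omega
  · nlinarith
  set n := n + 1
  have hn1 : 1 ≤ n := by omega
  by_cases hlow : lsafe - η * (K - 1) ≤ lam n
  · have hstep : lam n + η * n ≤ lam (n + 1) + η * ((n + 1 : ℕ) : ℝ) :=
      hdrift hn1 (hn1.trans n.le_succ) n.le_succ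
    push_cast at hstep
    linarith
  push Not at hlow
  have hbelow : ∀ s, 1 ≤ s → s ≤ n → lam s + η * (s + K - 1 - n) < lsafe := fun s hs hsn => by
    linarith [hdrift hs hn1 hsn]
  by_cases hnK : n < K
  · have h1 := hbelow 1 le_rfl hn1
    have : (n : ℝ) + 1 ≤ K := by exact_mod_cast hnK
    rw [Nat.cast_one] at h1
    nlinarith
  push Not at hnK
  have hsafe : ∀ s ∈ Icc (n - K + 1) n, lam s ≤ lsafe := fun s hs => by
    obtain ⟨hs1, hsn⟩ := mem_Icc.1 hs
    have : (n : ℝ) + 1 ≤ s + K := by exact_mod_cast (by omega : n + 1 ≤ s + K)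
    nlinarith [hbelow s (by omega) hsn]
  have hsum := hwindow n hnK hsafe
  rw [← Ico_add_one_right_eq_Icc, show (K : ℝ) = ((n + 1 - (n - K + 1) : ℕ) : ℝ) by
    congr 1; omega] at hsum
  exact (ih _ (by omega) (by omega)).trans
    (le_of_sum_Ico_le hη hupd (by omega) (by omega) hsum)

end ConformalController

theorem conformal_controller_risk_bound_general
    (η ε εsafe lsafe : ℝ) (K : ℕ) (ℓ lam : ℕ → ℝ)
    (hη : 0 < η) (hε : ε ∈ Set.Icc (0:ℝ) 1)
    (hsafe_le : εsafe ≤ ε)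
    (hK : 1 ≤ K)
    (hℓ : ∀ t ≥ 1, ℓ t ∈ Set.Icc (0:ℝ) 1)
    (hupd : ∀ t ≥ 1, lam (t + 1) = lam t + η * (ε - ℓ t))
    (hinit : lam 1 ≥ lsafe - η)
    (hevsafe : ∀ t ≥ K, (∀ s ∈ Finset.Icc (t - K + 1) t, lam s ≤ lsafe) →
      (1 / (K : ℝ)) * ∑ s ∈ Finset.Icc (t - K + 1) t, ℓ s ≤ εsafe) :
    ∀ t ≥ K, (1 / (t : ℝ)) * ∑ s ∈ Finset.Icc 1 t, ℓ s
      ≤ ε + ((lam 1 - lsafe) / η + (K : ℝ)) / t := by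
  intro t ht
  have hK0 : (0 : ℝ) < K := by exact_mod_cast hK
  have ht0 : (0 : ℝ) < t := by exact_mod_cast hK.trans ht
  have hwindow : ∀ t ≥ K, (∀ s ∈ Icc (t - K + 1) t, lam s ≤ lsafe) →
      ∑ s ∈ Icc (t - K + 1) t, ℓ s ≤ K * ε := fun t ht hsafe => by
    have := hevsafe t ht hsafe
    rw [one_div, inv_mul_le_iff₀ hK0] at this
    nlinarith
  have hdrift := ConformalController.monotoneOn_add_mul hη.le hε.1 (fun t ht => (hℓ t ht).2) hupd
  have hlow := ConformalController.sub_mul_le_lam hη.le hK hupd hdrift hinit.le hwindow (t + 1)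
    (by omega)
  have htel := ConformalController.sub_eq_mul_sub_sum_Ico hupd le_rfl (Nat.le_add_left 1 t)
  rw [Ico_add_one_right_eq_Icc, Nat.add_sub_cancel] at htel
  have hsum : ∑ s ∈ Icc 1 t, ℓ s ≤ t * ε + ((lam 1 - lsafe) / η + K) := by
    have hdiv : (lam 1 - lsafe) / η * η = lam 1 - lsafe := div_mul_cancel₀ _ hη.ne'
    nlinarith
  rw [one_div, inv_mul_le_iff₀ ht0, mul_add, mul_div_cancel₀ _ ht0.ne']
  exact hsum

theorem conformal_controller_risk_bound
    (η ε εsafe lsafe : ℝ) (K : ℕ) (ℓ lam : ℕ → ℝ)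
    (hη : 0 < η) (hε : ε ∈ Set.Icc (0:ℝ) 1)
    (hεsafe : εsafe ∈ Set.Icc (0:ℝ) 1) (hsafe_le : εsafe ≤ ε)
    (hK : 1 ≤ K)
    (hℓ : ∀ t ≥ 1, ℓ t ∈ Set.Icc (0:ℝ) 1)
    (hupd : ∀ t ≥ 1, lam (t + 1) = lam t + η * (ε - ℓ t))
    (hinit : lam 1 ≥ lsafe - η)
    (hevsafe : ∀ t ≥ K, (∀ s ∈ Finset.Icc (t - K + 1) t, lam s ≤ lsafe) →
      (1 / (K : ℝ)) * ∑ s ∈ Finset.Icc (t - K + 1) t, ℓ s ≤ εsafe) :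
    ∀ t ≥ K, (1 / (t : ℝ)) * ∑ s ∈ Finset.Icc 1 t, ℓ s
      ≤ ε + ((lam 1 - lsafe) / η + (K : ℝ)) / t :=
  conformal_controller_risk_bound_general η ε εsafe lsafe K ℓ lam hη hε hsafe_le hK hℓ hupd hinit
    hevsafe
end

section
/- Under the conformal controller update with eventual safety (horizon K, ε^safe ≤ ε), if λ_{t} ≥ λ^safe − Kη for all t ≤ T+1, then for all t ∈ [K, T], (1/t) Σ_{s=1}^{t} ℓ_s ≤ ε + (λ_1 − λ^safe + Kη)/(η t). -/
/-! Telescoping the update gives `λ_{t+1} = λ_1 + η (t ε - ∑_{s ≤ t} ℓ_s)`, so the lower bound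
`λ_{t+1} ≥ λ^safe - K η` is exactly a bound on the cumulative loss. -/

open Finset

section ConformalController

variable {η ε : ℝ} {ℓ lam : ℕ → ℝ}

theorem conformal_update_telescope (hupd : ∀ t ≥ 1, lam (t + 1) = lam t + η * (ε - ℓ t))
    (t : ℕ) : lam (t + 1) = lam 1 + η * (t * ε - ∑ s ∈ Icc 1 t, ℓ s) := by
  induction t with
  | zero => simp
  | succ n ih =>
    rw [hupd (n + 1) n.succ_pos, ih, sum_Icc_succ_top (Nat.le_add_left 1 n)]
    push_cast
    ring

theorem sum_loss_le_of_le_lam (hη : 0 < η)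
    (hupd : ∀ t ≥ 1, lam (t + 1) = lam t + η * (ε - ℓ t)) {b : ℝ} {t : ℕ}
    (hb : b ≤ lam (t + 1)) : ∑ s ∈ Icc 1 t, ℓ s ≤ t * ε + (lam 1 - b) / η := by
  rw [conformal_update_telescope hupd t] at hb
  rw [← sub_le_iff_le_add', le_div_iff₀ hη]
  linarith

theorem avg_loss_le_of_le_lam (hη : 0 < η)
    (hupd : ∀ t ≥ 1, lam (t + 1) = lam t + η * (ε - ℓ t)) {b : ℝ} {t : ℕ} (ht : 0 < t)
    (hb : b ≤ lam (t + 1)) :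
    (1 / (t : ℝ)) * ∑ s ∈ Icc 1 t, ℓ s ≤ ε + (lam 1 - b) / (η * t) := by
  have ht' : (0 : ℝ) < t := Nat.cast_pos.mpr ht
  calc (1 / (t : ℝ)) * ∑ s ∈ Icc 1 t, ℓ s
      ≤ (1 / (t : ℝ)) * (t * ε + (lam 1 - b) / η) := by
        gcongr; exact sum_loss_le_of_le_lam hη hupd hb
    _ = ε + (lam 1 - b) / (η * t) := by field_simp

end ConformalController

theorem conformal_risk_bound_from_lambda_bound_general
    (η ε lsafe : ℝ) (K T : ℕ) (ℓ lam : ℕ → ℝ)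
    (hη : 0 < η)
    (hK : 1 ≤ K)
    (hupd : ∀ t ≥ 1, lam (t + 1) = lam t + η * (ε - ℓ t))
    (hlb : ∀ t, 1 ≤ t → t ≤ T + 1 → lam t ≥ lsafe - (K : ℝ) * η) :
    ∀ t, K ≤ t → t ≤ T →
      (1 / (t : ℝ)) * ∑ s ∈ Finset.Icc 1 t, ℓ s
        ≤ ε + (lam 1 - lsafe + (K : ℝ) * η) / (η * t) := by
  intro t hKt htT
  have hb := hlb (t + 1) (Nat.le_add_left 1 t) (Nat.add_le_add_right htT 1)
  simpa only [sub_sub_eq_add_sub, add_sub_right_comm] using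
    avg_loss_le_of_le_lam hη hupd (hK.trans hKt) hb

theorem conformal_risk_bound_from_lambda_bound
    (η ε εsafe lsafe : ℝ) (K T : ℕ) (ℓ lam : ℕ → ℝ)
    (hη : 0 < η) (hε : ε ∈ Set.Icc (0:ℝ) 1)
    (hεsafe : εsafe ∈ Set.Icc (0:ℝ) 1) (hsafe_le : εsafe ≤ ε)
    (hK : 1 ≤ K)
    (hℓ : ∀ t ≥ 1, ℓ t ∈ Set.Icc (0:ℝ) 1)
    (hupd : ∀ t ≥ 1, lam (t + 1) = lam t + η * (ε - ℓ t))
    (hlb : ∀ t, 1 ≤ t → t ≤ T + 1 → lam t ≥ lsafe - (K : ℝ) * η) :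
    ∀ t, K ≤ t → t ≤ T →
      (1 / (t : ℝ)) * ∑ s ∈ Finset.Icc 1 t, ℓ s
        ≤ ε + (lam 1 - lsafe + (K : ℝ) * η) / (η * t) :=
  conformal_risk_bound_from_lambda_bound_general η ε lsafe K T ℓ lam hη hK hupd hlb
end

section
/- Under the conformal controller update λ_{t+1} = λ_t + η(ε − ℓ_t) with losses in [0,1], for any starting value λ_1, the empirical risk satisfies limsup_{t→∞} (1/t) Σ_{s=1}^{t} ℓ_s ≤ ε, provided the eventual-safety property holds with ε^safe ≤ ε and λ_1 ≥ λ^safe − η. -/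
/-!
Telescoping the update gives `λ_{1+t} = λ_1 + η (t ε - Σ_{s ≤ t} ℓ_s)`, so it suffices to bound
`λ_t` from below by `λ^safe - η K`. Since `ℓ ≤ 1`, the controller drops by at most `η` per step.
If one of the last `K` values before `t` exceeds `λ^safe`, this gives the bound directly; otherwise
the whole window is safe, its average loss is at most `ε^safe ≤ ε`, so `λ` did not decrease across
the window and strong induction applies.
-/

open Filter Finset

namespace ConformalController

variable {η ε : ℝ} {ℓ lam : ℕ → ℝ}

theorem lam_add_eq (hupd : ∀ t ≥ 1, lam (t + 1) = lam t + η * (ε - ℓ t))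
    {a : ℕ} (ha : 1 ≤ a) (n : ℕ) :
    lam (a + n) = lam a + η * (n * ε - ∑ s ∈ Ico a (a + n), ℓ s) := by
  induction n with
  | zero => simp
  | succ n ih =>
    rw [← add_assoc, hupd _ (by omega), ih, sum_Ico_succ_top (by omega)]
    push_cast
    ring

theorem lam_le_lam_add_of_sum_le (hupd : ∀ t ≥ 1, lam (t + 1) = lam t + η * (ε - ℓ t))
    (hη : 0 ≤ η) {a n : ℕ} (ha : 1 ≤ a) (hsum : ∑ s ∈ Ico a (a + n), ℓ s ≤ n * ε) :
    lam a ≤ lam (a + n) := by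
  rw [lam_add_eq hupd ha]
  nlinarith

theorem lam_sub_le_of_le (hupd : ∀ t ≥ 1, lam (t + 1) = lam t + η * (ε - ℓ t))
    (hη : 0 ≤ η) (hε : 0 ≤ ε) (hℓ : ∀ t ≥ 1, ℓ t ≤ 1) {s t : ℕ} (hs : 1 ≤ s) (hst : s ≤ t) :
    lam s - η * (t - s) ≤ lam t := by
  obtain ⟨n, rfl⟩ := Nat.exists_eq_add_of_le hst
  have hsum : ∑ i ∈ Ico s (s + n), ℓ i ≤ n := by
    simpa using sum_le_card_nsmul (Ico s (s + n)) ℓ 1 fun i hi => hℓ i (hs.trans (mem_Ico.1 hi).1)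
  have hnε : 0 ≤ (n : ℝ) * ε := by positivity
  rw [lam_add_eq hupd hs]
  push_cast
  nlinarith [mul_nonneg hη (by linarith : 0 ≤ n * ε - ∑ i ∈ Ico s (s + n), ℓ i + n)]

theorem lsafe_sub_le_lam (hupd : ∀ t ≥ 1, lam (t + 1) = lam t + η * (ε - ℓ t))
    (hη : 0 ≤ η) (hε : 0 ≤ ε) (hℓ : ∀ t ≥ 1, ℓ t ≤ 1) {εsafe lsafe : ℝ} {K : ℕ}
    (hsafe_le : εsafe ≤ ε) (hK : 1 ≤ K) (hinit : lsafe - η ≤ lam 1)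
    (hevsafe : ∀ t ≥ K, (∀ s ∈ Icc (t - K + 1) t, lam s ≤ lsafe) →
      (1 / (K : ℝ)) * ∑ s ∈ Icc (t - K + 1) t, ℓ s ≤ εsafe)
    {t : ℕ} (ht : 1 ≤ t) : lsafe - η * K ≤ lam t := by
  induction t using Nat.strong_induction_on with
  | _ t ih =>
  by_cases htK : t ≤ K
  · have hdrop := lam_sub_le_of_le hupd hη hε hℓ le_rfl ht
    have : η * t ≤ η * K := mul_le_mul_of_nonneg_left (by exact_mod_cast htK) hη
    push_cast at hdrop
    linarith
  obtain ⟨m, rfl⟩ : ∃ m, t = m + 1 + K := ⟨t - K - 1, by omega⟩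
  have hwindow : Icc (m + K - K + 1) (m + K) = Ico (m + 1) (m + 1 + K) := by
    rw [Nat.add_sub_cancel, ← Ico_add_one_right_eq_Icc, add_right_comm]
  by_cases hsafe : ∀ s ∈ Icc (m + K - K + 1) (m + K), lam s ≤ lsafe
  · have havg := hevsafe (m + K) (by omega) hsafe
    rw [hwindow] at havg
    have hsum : ∑ s ∈ Ico (m + 1) (m + 1 + K), ℓ s ≤ K * ε := by
      rw [one_div, inv_mul_le_iff₀ (by exact_mod_cast hK)] at havg
      exact havg.trans (mul_le_mul_of_nonneg_left hsafe_le K.cast_nonneg)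
    exact (ih (m + 1) (by omega) le_add_self).trans
      (lam_le_lam_add_of_sum_le hupd hη (by omega) hsum)
  · push Not at hsafe
    obtain ⟨s, hs, hlam⟩ := hsafe
    rw [hwindow, mem_Ico] at hs
    have : ((m + 1 + K : ℕ) : ℝ) - s ≤ K := by
      rw [sub_le_iff_le_add]; exact_mod_cast (by omega : m + 1 + K ≤ K + s)
    nlinarith [lam_sub_le_of_le hupd hη hε hℓ (by omega : 1 ≤ s) hs.2.le]

end ConformalController

theorem Filter.limsup_le_of_eventually_le_add_div {u : ℕ → ℝ} {ε c : ℝ}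
    (hu : IsBoundedUnder (· ≥ ·) atTop u) (h : ∀ᶠ t in atTop, u t ≤ ε + c / t) :
    limsup u atTop ≤ ε := by
  have hlim : Tendsto (fun t : ℕ => ε + c / t) atTop (nhds ε) := by
    simpa using tendsto_const_nhds.add (tendsto_const_div_atTop_nhds_zero_nat c)
  exact (limsup_le_limsup h hu.isCoboundedUnder_le hlim.isBoundedUnder_le).trans_eq
    hlim.limsup_eq

open ConformalController in
theorem conformal_controller_limsup_risk_general
    (η ε εsafe lsafe : ℝ) (K : ℕ) (ℓ lam : ℕ → ℝ)
    (hη : 0 < η) (hε : ε ∈ Set.Icc (0:ℝ) 1)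
    (hsafe_le : εsafe ≤ ε)
    (hK : 1 ≤ K)
    (hℓ : ∀ t ≥ 1, ℓ t ∈ Set.Icc (0:ℝ) 1)
    (hupd : ∀ t ≥ 1, lam (t + 1) = lam t + η * (ε - ℓ t))
    (hinit : lam 1 ≥ lsafe - η)
    (hevsafe : ∀ t ≥ K, (∀ s ∈ Finset.Icc (t - K + 1) t, lam s ≤ lsafe) →
      (1 / (K : ℝ)) * ∑ s ∈ Finset.Icc (t - K + 1) t, ℓ s ≤ εsafe) :
    Filter.limsup (fun t : ℕ => (1 / (t : ℝ)) * ∑ s ∈ Finset.Icc 1 t, ℓ s)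
      Filter.atTop ≤ ε := by
  set c := (lam 1 - lsafe + η * K) / η
  have hrisk : ∀ t : ℕ, 1 ≤ t → (1 / (t : ℝ)) * ∑ s ∈ Icc 1 t, ℓ s ≤ ε + c / t := by
    intro t ht
    have hlower := lsafe_sub_le_lam hupd hη.le hε.1 (fun t ht => (hℓ t ht).2) hsafe_le hK hinit
      hevsafe (Nat.le_add_right 1 t)
    rw [lam_add_eq hupd le_rfl, add_comm 1 t, Ico_add_one_right_eq_Icc] at hlower
    have hsum : ∑ s ∈ Icc 1 t, ℓ s ≤ t * ε + c := by
      rw [← sub_le_iff_le_add', le_div_iff₀ hη]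
      linarith
    have htpos : (0 : ℝ) < t := by exact_mod_cast ht
    rw [one_div, inv_mul_le_iff₀ htpos]
    calc ∑ s ∈ Icc 1 t, ℓ s ≤ t * ε + c := hsum
      _ = t * (ε + c / t) := by field_simp
  refine limsup_le_of_eventually_le_add_div (isBoundedUnder_of_eventually_ge (a := 0) ?_)
    (eventually_atTop.2 ⟨1, hrisk⟩)
  exact Eventually.of_forall fun t =>
    mul_nonneg (by positivity) (sum_nonneg fun s hs => (hℓ s (mem_Icc.1 hs).1).1)

theorem conformal_controller_limsup_risk
    (η ε εsafe lsafe : ℝ) (K : ℕ) (ℓ lam : ℕ → ℝ)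
    (hη : 0 < η) (hε : ε ∈ Set.Icc (0:ℝ) 1)
    (hεsafe : εsafe ∈ Set.Icc (0:ℝ) 1) (hsafe_le : εsafe ≤ ε)
    (hK : 1 ≤ K)
    (hℓ : ∀ t ≥ 1, ℓ t ∈ Set.Icc (0:ℝ) 1)
    (hupd : ∀ t ≥ 1, lam (t + 1) = lam t + η * (ε - ℓ t))
    (hinit : lam 1 ≥ lsafe - η)
    (hevsafe : ∀ t ≥ K, (∀ s ∈ Finset.Icc (t - K + 1) t, lam s ≤ lsafe) →
      (1 / (K : ℝ)) * ∑ s ∈ Finset.Icc (t - K + 1) t, ℓ s ≤ εsafe) :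
    Filter.limsup (fun t : ℕ => (1 / (t : ℝ)) * ∑ s ∈ Finset.Icc 1 t, ℓ s)
      Filter.atTop ≤ ε :=
  conformal_controller_limsup_risk_general η ε εsafe lsafe K ℓ lam hη hε hsafe_le hK hℓ hupd hinit
    hevsafe
end

section
/- For the conformal controller with K = 1 eventual safety (i.e., ℓ_t ≤ ε^safe whenever λ_t ≤ λ^safe, with ε^safe ≤ ε) and λ_1 ≥ λ^safe − η, one has λ_t ≥ λ^safe − η for all t, and hence (1/t) Σ_{s=1}^{t} ℓ_s ≤ ε + (λ_1 − λ^safe + η)/(η t). -/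
/-!
Below `λ^safe` the loss is at most `ε^safe ≤ ε`, so the step `η (ε - ℓ_t)` is nonnegative; above
`λ^safe` a single step loses at most `η`. Hence `λ_t` never drops below `λ^safe - η`. Telescoping
the update, `λ_{t+1} = λ_1 + η Σ_{s ≤ t} (ε - ℓ_s)`, and this lower bound on `λ_{t+1}` is the
bound on the average loss.
-/

open Finset

theorem eq_add_sum_Icc_of_succ_eq_add {u d : ℕ → ℝ} (h : ∀ t ≥ 1, u (t + 1) = u t + d t)
    (t : ℕ) : u (t + 1) = u 1 + ∑ s ∈ Icc 1 t, d s := by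
  induction t with
  | zero => simp
  | succ n ih => rw [h (n + 1) n.succ_pos, ih, sum_Icc_succ_top n.succ_pos, add_assoc]

theorem sub_le_add_mul_sub_of_safe {η ε εsafe lsafe ℓ l : ℝ} (hη : 0 ≤ η) (hε : 0 ≤ ε)
    (hsafe_le : εsafe ≤ ε) (hℓ : ℓ ≤ 1) (hsafe : l ≤ lsafe → ℓ ≤ εsafe) (hl : lsafe - η ≤ l) :
    lsafe - η ≤ l + η * (ε - ℓ) := by
  rcases le_or_gt l lsafe with hle | hgt
  · have : 0 ≤ η * (ε - ℓ) := mul_nonneg hη (by linarith [hsafe hle])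
    linarith
  · have : -η ≤ η * (ε - ℓ) := by nlinarith
    linarith

theorem mean_le_of_le_add_mul_sum {η ε x₀ c : ℝ} {ℓ : ℕ → ℝ} {t : ℕ} (hη : 0 < η) (ht : 1 ≤ t)
    (h : c ≤ x₀ + η * ∑ s ∈ Icc 1 t, (ε - ℓ s)) :
    1 / (t : ℝ) * ∑ s ∈ Icc 1 t, ℓ s ≤ ε + (x₀ - c) / (η * t) := by
  have htpos : (0 : ℝ) < t := by exact_mod_cast ht
  rw [sum_sub_distrib, sum_const, Nat.card_Icc, add_tsub_cancel_right, nsmul_eq_mul] at h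
  have hcancel : (t : ℝ) * ((x₀ - c) / (η * t)) = (x₀ - c) / η := by field_simp
  rw [one_div, inv_mul_le_iff₀ htpos, mul_add, hcancel, ← sub_le_iff_le_add', le_div_iff₀ hη]
  linarith

theorem conformal_controller_single_step_safety_general
    (η ε εsafe lsafe : ℝ) (ℓ lam : ℕ → ℝ)
    (hη : 0 < η) (hε : ε ∈ Set.Icc (0:ℝ) 1)
    (hsafe_le : εsafe ≤ ε)
    (hℓ : ∀ t ≥ 1, ℓ t ∈ Set.Icc (0:ℝ) 1)
    (hupd : ∀ t ≥ 1, lam (t + 1) = lam t + η * (ε - ℓ t))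
    (hsafe : ∀ t ≥ 1, lam t ≤ lsafe → ℓ t ≤ εsafe)
    (hinit : lam 1 ≥ lsafe - η) :
    (∀ t ≥ 1, lam t ≥ lsafe - η) ∧
    (∀ t : ℕ, 1 ≤ t → (1 / (t : ℝ)) * ∑ s ∈ Finset.Icc 1 t, ℓ s
      ≤ ε + (lam 1 - lsafe + η) / (η * t)) := by
  have hlower : ∀ t ≥ 1, lam t ≥ lsafe - η := by
    intro t ht
    induction t, ht using Nat.le_induction with
    | base => exact hinit
    | succ n hn ih =>
      rw [hupd n hn]
      exact sub_le_add_mul_sub_of_safe hη.le hε.1 hsafe_le (hℓ n hn).2 (hsafe n hn) ih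
  refine ⟨hlower, fun t ht => ?_⟩
  have hbound := hlower (t + 1) (Nat.le_add_left 1 t)
  rw [ge_iff_le, eq_add_sum_Icc_of_succ_eq_add hupd t, ← mul_sum] at hbound
  simpa only [sub_sub_eq_add_sub, add_sub_right_comm] using mean_le_of_le_add_mul_sum hη ht hbound

theorem conformal_controller_single_step_safety
    (η ε εsafe lsafe : ℝ) (ℓ lam : ℕ → ℝ)
    (hη : 0 < η) (hε : ε ∈ Set.Icc (0:ℝ) 1)
    (hεsafe : εsafe ∈ Set.Icc (0:ℝ) 1) (hsafe_le : εsafe ≤ ε)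
    (hℓ : ∀ t ≥ 1, ℓ t ∈ Set.Icc (0:ℝ) 1)
    (hupd : ∀ t ≥ 1, lam (t + 1) = lam t + η * (ε - ℓ t))
    (hsafe : ∀ t ≥ 1, lam t ≤ lsafe → ℓ t ≤ εsafe)
    (hinit : lam 1 ≥ lsafe - η) :
    (∀ t ≥ 1, lam t ≥ lsafe - η) ∧
    (∀ t : ℕ, 1 ≤ t → (1 / (t : ℝ)) * ∑ s ∈ Finset.Icc 1 t, ℓ s
      ≤ ε + (lam 1 - lsafe + η) / (η * t)) :=
  conformal_controller_single_step_safety_general η ε εsafe lsafe ℓ lam hη hε hsafe_le hℓ hupd hsafe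
    hinit
end

section
/- Under the conformal controller with eventual safety (λ^safe, ε^safe ≤ ε, horizon K) and λ_1 ≥ λ^safe − η, the total cumulative loss satisfies Σ_{s=1}^{t} ℓ_s ≤ εt + (λ_1 − λ^safe)/η + K for all t ≥ K, so the excess cumulative loss over the linear rate εt is bounded by a constant independent of t. -/
/-!
Telescoping the update gives `η (ε t - ∑_{s ≤ t} ℓ_s) = λ_{t+1} - λ_1`, so it suffices to show
`λ_t ≥ λ^safe - η K` for all `t`. Since each step lowers `λ` by at most `η`, this holds up to
time `K`. Later, look at the last `K` steps before `t`: if `λ` exceeded `λ^safe` somewhere in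
this window, it has dropped by at most `η K` since; otherwise eventual safety keeps the window's
average loss at most `ε`, so `λ` did not decrease across the window and induction applies.
-/

open Finset

section ConformalController

variable {η ε : ℝ} {ℓ lam : ℕ → ℝ}

theorem sub_eq_mul_sum_Ico_of_update (hupd : ∀ t ≥ 1, lam (t + 1) = lam t + η * (ε - ℓ t))
    {a b : ℕ} (ha : 1 ≤ a) (hab : a ≤ b) :
    lam b - lam a = η * ∑ s ∈ Ico a b, (ε - ℓ s) := by
  rw [← sum_Ico_sub lam hab, mul_sum]
  refine sum_congr rfl fun s hs => ?_
  rw [hupd s (ha.trans (mem_Ico.mp hs).1)]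
  ring

theorem sub_mul_le_of_update (hη : 0 ≤ η) (hε : 0 ≤ ε) (hℓ : ∀ t ≥ 1, ℓ t ≤ 1)
    (hupd : ∀ t ≥ 1, lam (t + 1) = lam t + η * (ε - ℓ t)) {a b : ℕ} (ha : 1 ≤ a) (hab : a ≤ b) :
    lam a - η * (b - a : ℕ) ≤ lam b := by
  have hstep : ∑ s ∈ Ico a b, (-1 : ℝ) ≤ ∑ s ∈ Ico a b, (ε - ℓ s) :=
    sum_le_sum fun s hs => by linarith [hℓ s (ha.trans (mem_Ico.mp hs).1)]
  rw [sum_const, Nat.card_Ico, nsmul_eq_mul, mul_neg_one] at hstep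
  have := mul_le_mul_of_nonneg_left hstep hη
  linarith [sub_eq_mul_sum_Ico_of_update hupd ha hab]

theorem le_of_sum_Ico_le (hη : 0 ≤ η) (hupd : ∀ t ≥ 1, lam (t + 1) = lam t + η * (ε - ℓ t))
    {a b : ℕ} (ha : 1 ≤ a) (hab : a ≤ b) (hsum : ∑ s ∈ Ico a b, ℓ s ≤ (b - a : ℕ) * ε) :
    lam a ≤ lam b := by
  have hnonneg : 0 ≤ ∑ s ∈ Ico a b, (ε - ℓ s) := by
    rw [sum_sub_distrib, sum_const, Nat.card_Ico, nsmul_eq_mul]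
    linarith
  linarith [sub_eq_mul_sum_Ico_of_update hupd ha hab, mul_nonneg hη hnonneg]

theorem lower_bound_of_window_sum_le {lsafe : ℝ} {K : ℕ} (hη : 0 ≤ η) (hε : 0 ≤ ε)
    (hK : 1 ≤ K) (hℓ : ∀ t ≥ 1, ℓ t ≤ 1)
    (hupd : ∀ t ≥ 1, lam (t + 1) = lam t + η * (ε - ℓ t)) (hinit : lsafe - η ≤ lam 1)
    (hwin : ∀ a ≥ 1, (∀ s ∈ Ico a (a + K), lam s ≤ lsafe) →
      ∑ s ∈ Ico a (a + K), ℓ s ≤ K * ε) :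
    ∀ t ≥ 1, lsafe - η * K ≤ lam t := by
  intro t ht
  induction t using Nat.strong_induction_on with
  | _ t ih =>
    by_cases htK : t ≤ K
    · have hdecay := sub_mul_le_of_update hη hε hℓ hupd le_rfl ht
      have hcast : ((t - 1 : ℕ) : ℝ) + 1 ≤ K := by exact_mod_cast (by omega : t - 1 + 1 ≤ K)
      linarith [mul_le_mul_of_nonneg_left hcast hη]
    obtain ⟨a, rfl⟩ : ∃ a, t = a + K := ⟨t - K, by omega⟩
    by_cases hsafe : ∀ s ∈ Ico a (a + K), lam s ≤ lsafe
    · have hsum : ∑ s ∈ Ico a (a + K), ℓ s ≤ (a + K - a : ℕ) * ε := by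
        simpa using hwin a (by omega) hsafe
      exact (ih a (by omega) (by omega)).trans (le_of_sum_Ico_le hη hupd (by omega) (by omega) hsum)
    · push Not at hsafe
      obtain ⟨s, hs, hlam⟩ := hsafe
      rw [mem_Ico] at hs
      have hdecay := sub_mul_le_of_update hη hε hℓ hupd (by omega : 1 ≤ s) hs.2.le
      have hcast : ((a + K - s : ℕ) : ℝ) ≤ K := by exact_mod_cast (by omega : a + K - s ≤ K)
      linarith [mul_le_mul_of_nonneg_left hcast hη]

end ConformalController

theorem sum_Ico_le_of_eventuallySafe {ε εsafe lsafe : ℝ} {K : ℕ} {ℓ lam : ℕ → ℝ}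
    (hsafe_le : εsafe ≤ ε) (hK : 1 ≤ K)
    (hevsafe : ∀ t ≥ K, (∀ s ∈ Icc (t - K + 1) t, lam s ≤ lsafe) →
      (1 / (K : ℝ)) * ∑ s ∈ Icc (t - K + 1) t, ℓ s ≤ εsafe)
    (a : ℕ) (ha : 1 ≤ a) (hsafe : ∀ s ∈ Ico a (a + K), lam s ≤ lsafe) :
    ∑ s ∈ Ico a (a + K), ℓ s ≤ K * ε := by
  have hwindow : Icc (a + K - 1 - K + 1) (a + K - 1) = Ico a (a + K) := by
    ext s
    simp only [mem_Icc, mem_Ico]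
    omega
  have hK0 : (0 : ℝ) < K := by exact_mod_cast hK
  have havg := hevsafe (a + K - 1) (by omega)
  rw [hwindow, one_div_mul_eq_div, div_le_iff₀ hK0] at havg
  linarith [havg hsafe, mul_le_mul_of_nonneg_left hsafe_le hK0.le]

theorem conformal_cumulative_loss_bound_general
    (η ε εsafe lsafe : ℝ) (K : ℕ) (ℓ lam : ℕ → ℝ)
    (hη : 0 < η) (hε : ε ∈ Set.Icc (0:ℝ) 1)
    (hsafe_le : εsafe ≤ ε)
    (hK : 1 ≤ K)
    (hℓ : ∀ t ≥ 1, ℓ t ∈ Set.Icc (0:ℝ) 1)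
    (hupd : ∀ t ≥ 1, lam (t + 1) = lam t + η * (ε - ℓ t))
    (hinit : lam 1 ≥ lsafe - η)
    (hevsafe : ∀ t ≥ K, (∀ s ∈ Finset.Icc (t - K + 1) t, lam s ≤ lsafe) →
      (1 / (K : ℝ)) * ∑ s ∈ Finset.Icc (t - K + 1) t, ℓ s ≤ εsafe) :
    ∀ t ≥ K, ∑ s ∈ Finset.Icc 1 t, ℓ s
      ≤ ε * t + (lam 1 - lsafe) / η + (K : ℝ) := by
  intro t _
  have hlow := lower_bound_of_window_sum_le hη.le hε.1 hK (fun t ht => (hℓ t ht).2) hupd hinit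
    (sum_Ico_le_of_eventuallySafe hsafe_le hK hevsafe) (t + 1) (by omega)
  have htel := sub_eq_mul_sum_Ico_of_update hupd le_rfl (by omega : 1 ≤ t + 1)
  rw [sum_sub_distrib, sum_const, Nat.card_Ico, nsmul_eq_mul, Ico_add_one_right_eq_Icc,
    Nat.add_sub_cancel] at htel
  have hscaled : η * ∑ s ∈ Icc 1 t, ℓ s ≤ η * (ε * t + (lam 1 - lsafe) / η + K) := by
    rw [mul_add, mul_add, mul_div_cancel₀ _ hη.ne']
    linarith
  exact le_of_mul_le_mul_left hscaled hη

theorem conformal_cumulative_loss_bound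
    (η ε εsafe lsafe : ℝ) (K : ℕ) (ℓ lam : ℕ → ℝ)
    (hη : 0 < η) (hε : ε ∈ Set.Icc (0:ℝ) 1)
    (hεsafe : εsafe ∈ Set.Icc (0:ℝ) 1) (hsafe_le : εsafe ≤ ε)
    (hK : 1 ≤ K)
    (hℓ : ∀ t ≥ 1, ℓ t ∈ Set.Icc (0:ℝ) 1)
    (hupd : ∀ t ≥ 1, lam (t + 1) = lam t + η * (ε - ℓ t))
    (hinit : lam 1 ≥ lsafe - η)
    (hevsafe : ∀ t ≥ K, (∀ s ∈ Finset.Icc (t - K + 1) t, lam s ≤ lsafe) →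
      (1 / (K : ℝ)) * ∑ s ∈ Finset.Icc (t - K + 1) t, ℓ s ≤ εsafe) :
    ∀ t ≥ K, ∑ s ∈ Finset.Icc 1 t, ℓ s
      ≤ ε * t + (lam 1 - lsafe) / η + (K : ℝ) :=
  conformal_cumulative_loss_bound_general η ε εsafe lsafe K ℓ lam hη hε hsafe_le hK hℓ hupd hinit
    hevsafe
end
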